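/- Let k be a field of characteristic zero, let Ω be a k-vector space of finite dimension n ≥ 1, let ⋆ ∈ Ω, and let Λ be a subspace of (Ω⊗Ω) ⊕ (Ω⊗Ω). There exists a unit action (α, β) for ⋆ with α = β that is coherent with Λ if and only if there exists a basis (∘₁, …, ∘ₙ) of Ω with ⋆ = ∘₁ + ⋯ + ∘ₙ such that Λ is contained in the span of the following elements of (Ω⊗Ω) ⊕ (Ω⊗Ω): (∘₁⊗⋆, ∘₁⊗⋆) + (⋆⊗∘₁, ⋆⊗∘₁) − (∘₁⊗∘₁, ∘₁⊗∘₁); and (∘ᵢ⊗∘ⱼ, 0) and (0, ∘ᵢ⊗∘ⱼ) for 2 ≤ i, j ≤ n. -/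

import Mathlib

open TensorProduct

section Defs

variable {k : Type*} [Field k]

noncomputable def contrL {Ω : Type*} [AddCommGroup Ω] [Module k Ω]
    (φ : Module.Dual k Ω) : Ω ⊗[k] Ω →ₗ[k] Ω :=
  (TensorProduct.lid k Ω).toLinearMap ∘ₗ TensorProduct.map φ LinearMap.id

noncomputable def contrR {Ω : Type*} [AddCommGroup Ω] [Module k Ω]
    (φ : Module.Dual k Ω) : Ω ⊗[k] Ω →ₗ[k] Ω :=
  (TensorProduct.rid k Ω).toLinearMap ∘ₗ TensorProduct.map LinearMap.id φ

noncomputable def contrB {Ω₁ Ω₂ : Type*} [AddCommGroup Ω₁] [Module k Ω₁]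
    [AddCommGroup Ω₂] [Module k Ω₂]
    (φ : Module.Dual k Ω₁) (ψ : Module.Dual k Ω₂) : Ω₁ ⊗[k] Ω₂ →ₗ[k] k :=
  (TensorProduct.lid k k).toLinearMap ∘ₗ TensorProduct.map φ ψ

/-- The coherence equations (C1)-(C5) for a pair `uv ∈ (Ω⊗Ω) × (Ω⊗Ω)`. -/
def CoherenceEqs {Ω : Type*} [AddCommGroup Ω] [Module k Ω]
    (α β : Module.Dual k Ω) (star : Ω)
    (uv : (Ω ⊗[k] Ω) × (Ω ⊗[k] Ω)) : Prop :=
  contrL β uv.1 = contrL β uv.2 ∧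
  contrL α uv.1 = contrR β uv.2 ∧
  contrR α uv.1 = contrR α uv.2 ∧
  contrR β uv.1 = contrB β β uv.2 • star ∧
  contrB α α uv.1 • star = contrL α uv.2

/-- The compatibility equations (C1)-(C3). -/
def CompatEqs {Ω : Type*} [AddCommGroup Ω] [Module k Ω]
    (α β : Module.Dual k Ω)
    (uv : (Ω ⊗[k] Ω) × (Ω ⊗[k] Ω)) : Prop :=
  contrL β uv.1 = contrL β uv.2 ∧
  contrL α uv.1 = contrR β uv.2 ∧
  contrR α uv.1 = contrR α uv.2

def IsCoherent {Ω : Type*} [AddCommGroup Ω] [Module k Ω]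
    (α β : Module.Dual k Ω) (star : Ω)
    (Λ : Submodule k ((Ω ⊗[k] Ω) × (Ω ⊗[k] Ω))) : Prop :=
  ∀ uv ∈ Λ, CoherenceEqs α β star uv

def IsCompatible {Ω : Type*} [AddCommGroup Ω] [Module k Ω]
    (α β : Module.Dual k Ω)
    (Λ : Submodule k ((Ω ⊗[k] Ω) × (Ω ⊗[k] Ω))) : Prop :=
  ∀ uv ∈ Λ, CompatEqs α β uv

end Defs

section Aux
variable {k : Type*} [Field k] {Ω : Type*} [AddCommGroup Ω] [Module k Ω]

@[simp] lemma contrL_tmul (φ : Module.Dual k Ω) (x y : Ω) :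
    contrL φ (x ⊗ₜ[k] y) = φ x • y := by simp [contrL]

@[simp] lemma contrR_tmul (φ : Module.Dual k Ω) (x y : Ω) :
    contrR φ (x ⊗ₜ[k] y) = φ y • x := by simp [contrR]

@[simp] lemma contrB_tmul (φ ψ : Module.Dual k Ω) (x y : Ω) :
    contrB φ ψ (x ⊗ₜ[k] y) = φ x * ψ y := by simp [contrB, smul_eq_mul]

variable {n : ℕ} (b : Module.Basis (Fin n) k Ω) (i0 : Fin n) (α : Module.Dual k Ω)
  (star : Ω)

lemma alpha_eq_coord (hα : ∀ i, α (b i) = if i = i0 then 1 else 0) (x : Ω) :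
    α x = b.repr x i0 := by
  have : α = b.coord i0 := b.ext fun i => by
    simp [hα, Module.Basis.coord_apply, Finsupp.single_apply, eq_comm]
  rw [this, Module.Basis.coord_apply]

lemma repr_star_eq_one (hstar : star = ∑ i, b i) (j : Fin n) :
    b.repr star j = 1 := by
  rw [hstar, map_sum]
  simp [Finsupp.single_apply]

lemma alpha_star_eq_one (hα : ∀ i, α (b i) = if i = i0 then 1 else 0)
    (hstar : star = ∑ i, b i) : α star = 1 := by
  rw [alpha_eq_coord b i0 α hα, repr_star_eq_one b star hstar]

lemma reprL (hα : ∀ i, α (b i) = if i = i0 then 1 else 0)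
    (u : Ω ⊗[k] Ω) (j : Fin n) :
    b.repr (contrL α u) j = (b.tensorProduct b).repr u (i0, j) := by
  induction u using TensorProduct.induction_on with
  | zero => simp
  | tmul x y =>
    rw [contrL_tmul, map_smul, alpha_eq_coord b i0 α hα]
    simp [Module.Basis.tensorProduct_repr_tmul_apply, smul_eq_mul, mul_comm]
  | add x y hx hy => simp [map_add, hx, hy]

lemma reprR (hα : ∀ i, α (b i) = if i = i0 then 1 else 0)
    (u : Ω ⊗[k] Ω) (i : Fin n) :
    b.repr (contrR α u) i = (b.tensorProduct b).repr u (i, i0) := by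
  induction u using TensorProduct.induction_on with
  | zero => simp
  | tmul x y =>
    rw [contrR_tmul, map_smul, alpha_eq_coord b i0 α hα]
    simp [Module.Basis.tensorProduct_repr_tmul_apply, smul_eq_mul, mul_comm]
  | add x y hx hy => simp [map_add, hx, hy]

lemma reprB (hα : ∀ i, α (b i) = if i = i0 then 1 else 0)
    (u : Ω ⊗[k] Ω) :
    contrB α α u = (b.tensorProduct b).repr u (i0, i0) := by
  induction u using TensorProduct.induction_on with
  | zero => simp
  | tmul x y =>
    rw [contrB_tmul, alpha_eq_coord b i0 α hα, alpha_eq_coord b i0 α hα]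
    simp [Module.Basis.tensorProduct_repr_tmul_apply, smul_eq_mul, mul_comm]
  | add x y hx hy => simp [map_add, hx, hy]

end Aux

section Main
variable {k : Type*} [Field k] {Ω : Type*} [AddCommGroup Ω] [Module k Ω]
variable {n : ℕ} (b : Module.Basis (Fin n) k Ω) (i0 : Fin n) (α : Module.Dual k Ω)
  (star : Ω)

/-- The generating set from the statement. -/
def genSet : Set ((Ω ⊗[k] Ω) × (Ω ⊗[k] Ω)) :=
  ({(b i0 ⊗ₜ[k] star, b i0 ⊗ₜ[k] star) +
     (star ⊗ₜ[k] b i0, star ⊗ₜ[k] b i0) -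
     (b i0 ⊗ₜ[k] b i0, b i0 ⊗ₜ[k] b i0)} ∪
    {x | ∃ i j : Fin n, 1 ≤ (i : ℕ) ∧ 1 ≤ (j : ℕ) ∧
      (x = (b i ⊗ₜ[k] b j, 0) ∨ x = (0, b i ⊗ₜ[k] b j))})

lemma sol_le_span (hi0 : (i0 : ℕ) = 0)
    (hα : ∀ i, α (b i) = if i = i0 then 1 else 0)
    (hstar : star = ∑ i, b i)
    (uv : (Ω ⊗[k] Ω) × (Ω ⊗[k] Ω)) (h : CoherenceEqs α α star uv) :
    uv ∈ Submodule.span k (genSet b i0 star) := by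
  obtain ⟨u, v⟩ := uv
  obtain ⟨h1, h2, h3, h4, h5⟩ := h
  -- coefficient relations
  have e1 : ∀ j, (b.tensorProduct b).repr u (i0, j) = (b.tensorProduct b).repr v (i0, j) :=
    fun j => by rw [← reprL b i0 α hα u j, ← reprL b i0 α hα v j]; exact congrArg (fun z => b.repr z j) h1
  have e3 : ∀ i, (b.tensorProduct b).repr u (i, i0) = (b.tensorProduct b).repr v (i, i0) :=
    fun i => by rw [← reprR b i0 α hα u i, ← reprR b i0 α hα v i]; exact congrArg (fun z => b.repr z i) h3
  have e4 : ∀ i, (b.tensorProduct b).repr u (i, i0) = (b.tensorProduct b).repr v (i0, i0) := fun i => by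
    have h4' := congrArg (fun z => b.repr z i) h4
    simp only [map_smul, Finsupp.smul_apply, smul_eq_mul] at h4'
    rw [reprR b i0 α hα u i, reprB b i0 α hα v,
      repr_star_eq_one b star hstar, mul_one] at h4'
    exact h4'
  have e5 : ∀ j, (b.tensorProduct b).repr u (i0, i0) = (b.tensorProduct b).repr v (i0, j) := fun j => by
    have h5' := congrArg (fun z => b.repr z j) h5
    simp only [map_smul, Finsupp.smul_apply, smul_eq_mul] at h5'
    rw [reprL b i0 α hα v j, reprB b i0 α hα u,
      repr_star_eq_one b star hstar, mul_one] at h5'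
    exact h5'
  set c : k := (b.tensorProduct b).repr u (i0, i0) with hc
  have hVtop : ∀ j, (b.tensorProduct b).repr v (i0, j) = c := fun j => (e5 j).symm
  have hUtop : ∀ j, (b.tensorProduct b).repr u (i0, j) = c := fun j => (e1 j).trans (hVtop j)
  have hUleft : ∀ i, (b.tensorProduct b).repr u (i, i0) = c := fun i => (e4 i).trans (hVtop i0)
  have hVleft : ∀ i, (b.tensorProduct b).repr v (i, i0) = c := fun i => (e3 i).symm.trans (hUleft i)
  have hUb : ∀ p : Fin n × Fin n, p.1 = i0 ∨ p.2 = i0 → (b.tensorProduct b).repr u p = c := by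
    rintro ⟨i, j⟩ (h | h)
    · dsimp at h; rw [h]; exact hUtop j
    · dsimp at h; rw [h]; exact hUleft i
  have hVb : ∀ p : Fin n × Fin n, p.1 = i0 ∨ p.2 = i0 → (b.tensorProduct b).repr v p = c := by
    rintro ⟨i, j⟩ (h | h)
    · dsimp at h; rw [h]; exact hVtop j
    · dsimp at h; rw [h]; exact hVleft i
  -- the border element
  set w : Ω ⊗[k] Ω := b i0 ⊗ₜ[k] star + star ⊗ₜ[k] b i0 - b i0 ⊗ₜ[k] b i0 with hw
  have hW : ∀ p : Fin n × Fin n, p.1 = i0 ∨ p.2 = i0 → (b.tensorProduct b).repr w p = 1 := by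
    rintro ⟨i, j⟩ hp
    simp only [hw, map_add, map_sub, Finsupp.add_apply, Finsupp.sub_apply,
      Module.Basis.tensorProduct_repr_tmul_apply, repr_star_eq_one b star hstar,
      Module.Basis.repr_self, Finsupp.single_apply, smul_eq_mul]
    rcases hp with h | h <;> dsimp at h <;> rw [h] <;> simp
  have hsupp : ∀ (x : Ω ⊗[k] Ω),
      (∀ p : Fin n × Fin n, p.1 = i0 ∨ p.2 = i0 → (b.tensorProduct b).repr x p = c) →
      x - c • w ∈ Submodule.span k
        (⇑(b.tensorProduct b) '' {p : Fin n × Fin n | p.1 ≠ i0 ∧ p.2 ≠ i0}) := by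
    intro x hx
    rw [Module.Basis.mem_span_image]
    intro p hp
    simp only [Finset.mem_coe, Finsupp.mem_support_iff] at hp
    by_contra hps
    apply hp
    simp only [Set.mem_setOf_eq, not_and_or, not_not] at hps
    rw [map_sub, map_smul, Finsupp.sub_apply, Finsupp.smul_apply, smul_eq_mul,
      hx p hps, hW p hps, mul_one, sub_self]
  have hu' := hsupp u hUb
  have hv' := hsupp v hVb
  -- map into the span of genSet
  have himg : ∀ (f : (Ω ⊗[k] Ω) →ₗ[k] ((Ω ⊗[k] Ω) × (Ω ⊗[k] Ω))),
      (∀ p : Fin n × Fin n, p.1 ≠ i0 → p.2 ≠ i0 → f ((b.tensorProduct b) p) ∈ genSet b i0 star) →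
      ∀ x ∈ Submodule.span k (⇑(b.tensorProduct b) '' {p : Fin n × Fin n | p.1 ≠ i0 ∧ p.2 ≠ i0}),
      f x ∈ Submodule.span k (genSet b i0 star) := by
    intro f hf x hx
    have : Submodule.map f (Submodule.span k
        (⇑(b.tensorProduct b) '' {p : Fin n × Fin n | p.1 ≠ i0 ∧ p.2 ≠ i0}))
        ≤ Submodule.span k (genSet b i0 star) := by
      rw [Submodule.map_span]
      apply Submodule.span_mono
      rintro _ ⟨_, ⟨p, hp, rfl⟩, rfl⟩
      exact hf p hp.1 hp.2
    exact this (Submodule.mem_map_of_mem hx)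
  have hmem1 : ((u - c • w, 0) : (Ω ⊗[k] Ω) × (Ω ⊗[k] Ω)) ∈
      Submodule.span k (genSet b i0 star) := by
    refine himg (LinearMap.inl k _ _) ?_ _ hu'
    intro p hp1 hp2
    right
    refine ⟨p.1, p.2, ?_, ?_, Or.inl ?_⟩
    · have := Fin.ext_iff.not.mp hp1; omega
    · have := Fin.ext_iff.not.mp hp2; omega
    · rw [Module.Basis.tensorProduct_apply']; rfl
  have hmem2 : ((0, v - c • w) : (Ω ⊗[k] Ω) × (Ω ⊗[k] Ω)) ∈
      Submodule.span k (genSet b i0 star) := by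
    refine himg (LinearMap.inr k _ _) ?_ _ hv'
    intro p hp1 hp2
    right
    refine ⟨p.1, p.2, ?_, ?_, Or.inr ?_⟩
    · have := Fin.ext_iff.not.mp hp1; omega
    · have := Fin.ext_iff.not.mp hp2; omega
    · rw [Module.Basis.tensorProduct_apply']; rfl
  have hg : ((w, w) : (Ω ⊗[k] Ω) × (Ω ⊗[k] Ω)) ∈ Submodule.span k (genSet b i0 star) := by
    apply Submodule.subset_span
    left
    rw [hw]
    rfl
  have huv : ((u, v) : (Ω ⊗[k] Ω) × (Ω ⊗[k] Ω)) =
      c • (w, w) + ((u - c • w, 0) + (0, v - c • w)) := by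
    ext <;> simp
  rw [huv]
  exact add_mem (Submodule.smul_mem _ _ hg) (add_mem hmem1 hmem2)



/-- The set of solutions of the coherence equations is a submodule. -/
noncomputable def solMod (α β : Module.Dual k Ω) (star : Ω) :
    Submodule k ((Ω ⊗[k] Ω) × (Ω ⊗[k] Ω)) where
  carrier := {uv | CoherenceEqs α β star uv}
  zero_mem' := by
    refine ⟨?_, ?_, ?_, ?_, ?_⟩ <;> simp
  add_mem' := by
    rintro ⟨u, v⟩ ⟨u', v'⟩ ⟨h1, h2, h3, h4, h5⟩ ⟨g1, g2, g3, g4, g5⟩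
    refine ⟨?_, ?_, ?_, ?_, ?_⟩ <;>
      simp only [Prod.fst_add, Prod.snd_add, map_add, add_smul] at * <;>
      simp [h1, h2, h3, h4, h5, g1, g2, g3, g4, g5]
  smul_mem' := by
    rintro t ⟨u, v⟩ ⟨h1, h2, h3, h4, h5⟩
    refine ⟨?_, ?_, ?_, ?_, ?_⟩ <;>
      simp only [Prod.smul_fst, Prod.smul_snd, map_smul, smul_assoc] at * <;>
      simp [h1, h2, h3, h4, h5]

lemma genSet_subset_sol (hi0 : (i0 : ℕ) = 0)
    (hα : ∀ i, α (b i) = if i = i0 then 1 else 0)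
    (hstar : star = ∑ i, b i) :
    genSet b i0 star ⊆ (solMod α α star : Set ((Ω ⊗[k] Ω) × (Ω ⊗[k] Ω))) := by
  have hb0 : α (b i0) = 1 := by rw [hα]; simp
  have hs1 : α star = 1 := alpha_star_eq_one b i0 α star hα hstar
  rintro x (hx | ⟨i, j, hi, hj, hx | hx⟩)
  · simp only [Set.mem_singleton_iff] at hx
    have hxw : x = ((b i0 ⊗ₜ[k] star + star ⊗ₜ[k] b i0 - b i0 ⊗ₜ[k] b i0 : Ω ⊗[k] Ω),
        (b i0 ⊗ₜ[k] star + star ⊗ₜ[k] b i0 - b i0 ⊗ₜ[k] b i0 : Ω ⊗[k] Ω)) := by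
      rw [hx]; ext <;> simp
    have hL : contrL α (b i0 ⊗ₜ[k] star + star ⊗ₜ[k] b i0 - b i0 ⊗ₜ[k] b i0) = star := by
      simp [hb0, hs1]
    have hR : contrR α (b i0 ⊗ₜ[k] star + star ⊗ₜ[k] b i0 - b i0 ⊗ₜ[k] b i0) = star := by
      simp [hb0, hs1]
    have hB : contrB α α (b i0 ⊗ₜ[k] star + star ⊗ₜ[k] b i0 - b i0 ⊗ₜ[k] b i0) = 1 := by
      simp [hb0, hs1]
    show CoherenceEqs α α star x
    rw [hxw]
    refine ⟨rfl, ?_, rfl, ?_, ?_⟩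
    · show contrL α _ = contrR α _
      rw [hL, hR]
    · show contrR α _ = contrB α α _ • star
      rw [hR, hB, one_smul]
    · show contrB α α _ • star = contrL α _
      rw [hB, hL, one_smul]
  · have hi' : i ≠ i0 := fun he => by rw [he, hi0] at hi; omega
    have hj' : j ≠ i0 := fun he => by rw [he, hi0] at hj; omega
    have hbi : α (b i) = 0 := by rw [hα]; simp [hi']
    have hbj : α (b j) = 0 := by rw [hα]; simp [hj']
    subst hx
    exact ⟨by simp [hbi], by simp [hbi, hbj], by simp [hbj], by simp [hbj], by simp [hbi]⟩
  · have hi' : i ≠ i0 := fun he => by rw [he, hi0] at hi; omega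
    have hj' : j ≠ i0 := fun he => by rw [he, hi0] at hj; omega
    have hbi : α (b i) = 0 := by rw [hα]; simp [hi']
    have hbj : α (b j) = 0 := by rw [hα]; simp [hj']
    subst hx
    exact ⟨by simp [hbi], by simp [hbj], by simp [hbj], by simp [hbi, hbj], by simp [hbi]⟩

end Main

theorem coherent_eq_classification'
    {k : Type*} [Field k] [CharZero k]
    {Ω : Type*} [AddCommGroup Ω] [Module k Ω] [FiniteDimensional k Ω]
    (n : ℕ) (hn : 1 ≤ n) (hdim : Module.finrank k Ω = n)
    (star : Ω) (Λ : Submodule k ((Ω ⊗[k] Ω) × (Ω ⊗[k] Ω)))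
    (hyp : ∃ α β : Module.Dual k Ω,
        α star = 1 ∧ β star = 1 ∧ α = β ∧ ∀ uv ∈ Λ, CoherenceEqs α β star uv) :
    (∃ b : Module.Basis (Fin n) k Ω, star = ∑ i, b i ∧
      Λ ≤ Submodule.span k (genSet b ⟨0, hn⟩ star)) := by
  obtain ⟨α, β, hα1, hβ1, rfl, hcoh⟩ := hyp
  obtain ⟨m, rfl⟩ : ∃ m, n = m + 1 := ⟨n - 1, by omega⟩
  have hrange : LinearMap.range α = ⊤ := by
    rw [LinearMap.range_eq_top]
    intro t
    exact ⟨t • star, by simp [hα1, smul_eq_mul]⟩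
  have hker : Module.finrank k (LinearMap.ker α) = m := by
    have h := LinearMap.finrank_range_add_finrank_ker α
    rw [hrange, finrank_top] at h
    simp only [Module.finrank_self, hdim] at h
    omega
  let c : Module.Basis (Fin m) k (LinearMap.ker α) := Module.finBasisOfFinrankEq k _ hker
  have hcker : ∀ j : Fin m, α ((c j : Ω)) = 0 := fun j => LinearMap.mem_ker.mp (c j).2
  set f : Fin (m+1) → Ω := Fin.cons (star - ∑ j, (c j : Ω)) (fun j => (c j : Ω)) with hf
  have hcmem : ∀ j : Fin m, (c j : Ω) ∈ Submodule.span k (Set.range f) := fun j => by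
    have hj : (c j : Ω) = f j.succ := by simp [hf]
    rw [hj]; exact Submodule.subset_span ⟨_, rfl⟩
  have hstarmem : star ∈ Submodule.span k (Set.range f) := by
    have hst : star = f 0 + ∑ j, (c j : Ω) := by simp [hf]
    rw [hst]
    exact add_mem (Submodule.subset_span ⟨_, rfl⟩)
      (Submodule.sum_mem _ fun j _ => hcmem j)
  have hKle : ∀ y ∈ LinearMap.ker α, y ∈ Submodule.span k (Set.range f) := by
    intro y hy
    have hs := c.sum_repr ⟨y, hy⟩
    have hy2 : y = ∑ j, c.repr ⟨y, hy⟩ j • (c j : Ω) := by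
      have h2 := congrArg Subtype.val hs.symm
      exact h2.trans (by simp only [AddSubmonoidClass.coe_finset_sum, SetLike.val_smul])
    rw [hy2]
    exact Submodule.sum_mem _ fun j _ => Submodule.smul_mem _ _ (hcmem j)
  have hspan : ⊤ ≤ Submodule.span k (Set.range f) := by
    intro x _
    have hx : x - α x • star ∈ LinearMap.ker α := by
      simp [LinearMap.mem_ker, map_sub, map_smul, hα1, smul_eq_mul]
    have hxx : x = α x • star + (x - α x • star) := by abel
    rw [hxx]
    exact add_mem (Submodule.smul_mem _ _ hstarmem) (hKle _ hx)
  have hcard : Fintype.card (Fin (m+1)) = Module.finrank k Ω := by simp [hdim]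
  let b : Module.Basis (Fin (m+1)) k Ω := basisOfTopLeSpanOfCardEqFinrank f hspan hcard
  have hb : ∀ i, b i = f i := fun i =>
    congrFun (coe_basisOfTopLeSpanOfCardEqFinrank f hspan hcard) i
  have hstar' : star = ∑ i, b i := by
    have : ∑ i, b i = ∑ i, f i := Finset.sum_congr rfl fun i _ => hb i
    rw [this, Fin.sum_univ_succ]
    simp [hf]
  have hαb : ∀ i : Fin (m+1), α (b i) = if i = (⟨0, by omega⟩ : Fin (m+1)) then 1 else 0 := by
    intro i
    induction i using Fin.cases with
    | zero =>
      rw [if_pos (by ext; simp), hb, hf]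
      simp [hα1, hcker]
    | succ j =>
      rw [if_neg (by simp [Fin.ext_iff]), hb, hf]
      simp [hcker]
  refine ⟨b, hstar', ?_⟩
  intro uv huv
  exact sol_le_span b ⟨0, by omega⟩ α star rfl hαb hstar' uv (hcoh uv huv)

/-- Classification of coherent unit actions with α = β (Theorem 3.1(2)). -/
theorem coherent_eq_classification
    {k : Type*} [Field k] [CharZero k]
    {Ω : Type*} [AddCommGroup Ω] [Module k Ω] [FiniteDimensional k Ω]
    (n : ℕ) (hn : 1 ≤ n) (hdim : Module.finrank k Ω = n)
    (star : Ω) (Λ : Submodule k ((Ω ⊗[k] Ω) × (Ω ⊗[k] Ω))) :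
    (∃ α β : Module.Dual k Ω,
        α star = 1 ∧ β star = 1 ∧ α = β ∧ IsCoherent α β star Λ) ↔
    (∃ b : Module.Basis (Fin n) k Ω, star = ∑ i, b i ∧
      Λ ≤ Submodule.span k
        (({(b ⟨0, by omega⟩ ⊗ₜ[k] star, b ⟨0, by omega⟩ ⊗ₜ[k] star) +
           (star ⊗ₜ[k] b ⟨0, by omega⟩, star ⊗ₜ[k] b ⟨0, by omega⟩) -
           (b ⟨0, by omega⟩ ⊗ₜ[k] b ⟨0, by omega⟩,
            b ⟨0, by omega⟩ ⊗ₜ[k] b ⟨0, by omega⟩)} ∪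
          {x | ∃ i j : Fin n, 1 ≤ (i : ℕ) ∧ 1 ≤ (j : ℕ) ∧
            (x = (b i ⊗ₜ[k] b j, 0) ∨ x = (0, b i ⊗ₜ[k] b j))} :
          Set ((Ω ⊗[k] Ω) × (Ω ⊗[k] Ω))))) := by
  constructor
  · intro h
    obtain ⟨b, h1, h2⟩ := coherent_eq_classification' n hn hdim star Λ h
    exact ⟨b, h1, h2⟩
  · rintro ⟨b, hstar, hΛ⟩
    have hα : ∀ i, (b.coord ⟨0, by omega⟩) (b i) =
        if i = (⟨0, by omega⟩ : Fin n) then 1 else 0 := by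
      intro i
      simp [Module.Basis.coord_apply, Module.Basis.repr_self, Finsupp.single_apply]
    refine ⟨b.coord ⟨0, by omega⟩, b.coord ⟨0, by omega⟩,
      alpha_star_eq_one b _ _ star hα hstar,
      alpha_star_eq_one b _ _ star hα hstar, rfl, ?_⟩
    intro uv huv
    exact Submodule.span_le.mpr
      (genSet_subset_sol b ⟨0, by omega⟩ (b.coord ⟨0, by omega⟩) star rfl hα hstar)
      (hΛ huv)
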